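/- For every nontrivial connected graph G, λ(G) ≤ λ⁺(G) ≤ rd(G) ≤ χ′(G) ≤ Δ(G) + 1, where λ is the edge-connectivity, λ⁺ the upper edge-connectivity, rd the rainbow disconnection number, χ′ the chromatic index, and Δ the maximum degree. -/

import Mathlib

variable {V : Type*} [Fintype V] [DecidableEq V]

/-- `S` separates `s` and `t` in `G`: after deleting the edges of `S`,
`s` and `t` are not reachable from each other. -/
def Separates (G : SimpleGraph V) (S : Set (Sym2 V)) (s t : V) : Prop :=
  ¬ (G.deleteEdges S).Reachable s t

/-- `λ(s,t)`: minimum size of a set of edges of `G` separating `s` and `t`. -/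
noncomputable def lamST (G : SimpleGraph V) (s t : V) : ℕ :=
  sInf {n | ∃ S : Finset (Sym2 V), ↑S ⊆ G.edgeSet ∧ Separates G ↑S s t ∧ S.card = n}

/-- Upper edge-connectivity `λ⁺(G)`: maximum of `λ(s,t)` over distinct pairs. -/
noncomputable def lamPlus (G : SimpleGraph V) : ℕ :=
  sSup {n | ∃ s t : V, s ≠ t ∧ lamST G s t = n}

/-- Edge-connectivity `λ(G)`: minimum size of an edge set whose deletion disconnects `G`. -/
noncomputable def edgeConn (G : SimpleGraph V) : ℕ :=
  sInf {n | ∃ S : Finset (Sym2 V), ↑S ⊆ G.edgeSet ∧ ¬ (G.deleteEdges ↑S).Connected ∧ S.card = n}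

/-- `G` is `k`-edge-connected: every disconnecting edge set has at least `k` edges. -/
def EdgeConnected (G : SimpleGraph V) (k : ℕ) : Prop :=
  ∀ S : Finset (Sym2 V), ↑S ⊆ G.edgeSet → ¬ (G.deleteEdges ↑S).Connected → k ≤ S.card

/-- `c` is a rainbow disconnection coloring of `G`: every pair of distinct vertices is
separated by an edge-cut whose edges receive pairwise distinct colors. -/
def IsRDColoring {α : Type*} (G : SimpleGraph V) (c : Sym2 V → α) : Prop :=
  ∀ s t : V, s ≠ t → ∃ S : Finset (Sym2 V), ↑S ⊆ G.edgeSet ∧ Set.InjOn c ↑S ∧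
    Separates G ↑S s t

/-- The rainbow disconnection number `rd(G)`: minimum number of colors in a rainbow
disconnection coloring of `G`. -/
noncomputable def rd (G : SimpleGraph V) : ℕ :=
  sInf {k | ∃ c : Sym2 V → ℕ, (∀ e ∈ G.edgeSet, c e < k) ∧ IsRDColoring G c}

/-- `c` is a proper edge-coloring of `G`: distinct edges sharing a vertex get distinct colors. -/
def IsProperEdgeColoring {α : Type*} (G : SimpleGraph V) (c : Sym2 V → α) : Prop :=
  ∀ e ∈ G.edgeSet, ∀ f ∈ G.edgeSet, e ≠ f → (∃ v : V, v ∈ e ∧ v ∈ f) → c e ≠ c f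

/-- The chromatic index `χ'(G)`: minimum number of colors in a proper edge-coloring. -/
noncomputable def chromIndex (G : SimpleGraph V) : ℕ :=
  sInf {k | ∃ c : Sym2 V → ℕ, (∀ e ∈ G.edgeSet, c e < k) ∧ IsProperEdgeColoring G c}

/-!
The first three inequalities are elementary: a minimum `s`–`t` cut disconnects `G`; a rainbow
cut separating `s` and `t` has at most `rd G` edges; and in a proper edge-coloring the edges at
`s` form a rainbow cut separating `s` from every other vertex. The last one is Vizing's theorem,
proved by coloring the edges one at a time. To color `xy`, take a maximal fan `y = f 0, …, f n` at
`x` (each edge `x f (i+1)` has a color missing at `f i`), a color `α` missing at `x` and a color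
`β` missing at `f n`. If `β` is also missing at `x`, rotate the whole fan and give `x f n` the
color `β`. Otherwise `β` sits on a fan edge `x f (j+1)`, so `β` is missing at `f j` as well; the
α/β-Kempe chain through `x` is a path and cannot reach both `f j` and `f n`, and after swapping
it one of the rotations up to `f j` or `f n` again leaves `β` free at both ends.
-/

open Finset

section Paths
variable {V : Type*}

namespace SimpleGraph
variable {G : SimpleGraph V}

lemma Reachable.of_forall_adj {G' : SimpleGraph V} (h : ∀ a b, G.Adj a b → G'.Reachable a b)
    {u v : V} (huv : G.Reachable u v) : G'.Reachable u v := by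
  rw [reachable_eq_reflTransGen] at huv
  induction huv with
  | refl => rfl
  | tail _ hab ih => exact ih.trans (h _ _ hab)

lemma Connected.card_filter_degree_le_one_le_two [Fintype V] [DecidableRel G.Adj]
    (hG : G.Connected) (hdeg : ∀ v, G.degree v ≤ 2) : #{v | G.degree v ≤ 1} ≤ 2 := by
  have hconn := hG.card_vert_le_card_edgeSet_add_one
  rw [Nat.card_eq_fintype_card, Nat.card_eq_fintype_card, ← edgeFinset_card] at hconn
  have hsum : ∑ v, (G.degree v + if G.degree v ≤ 1 then 1 else 0) ≤ ∑ _v : V, 2 :=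
    sum_le_sum fun v _ => by split_ifs <;> grind [hdeg v]
  rw [sum_add_distrib, sum_degrees_eq_twice_card_edges, sum_boole, sum_const, card_univ,
    smul_eq_mul, Nat.cast_id] at hsum
  omega

lemma not_reachable_of_degree_le_one [Fintype V] [DecidableRel G.Adj]
    (hdeg : ∀ v, G.degree v ≤ 2) {x u w : V} (hxu : x ≠ u) (hxw : x ≠ w) (huw : u ≠ w)
    (hx : G.degree x ≤ 1) (hu : G.degree u ≤ 1) (hw : G.degree w ≤ 1)
    (hreach : G.Reachable x u) : ¬G.Reachable x w := by
  classical
  intro hreach'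
  set C := G.connectedComponentMk x
  have hmem {v : V} (hv : G.Reachable x v) : v ∈ C.supp :=
    (C.mem_supp_iff v).2 (ConnectedComponent.sound hv).symm
  have hdegC (v : C.supp) : (G.induce C.supp).degree v = G.degree v :=
    degree_induce_of_neighborSet_subset fun y hy =>
      (ConnectedComponent.connectedComponentMk_eq_of_adj hy).symm.trans v.2
  have hC : (G.induce C.supp).Connected := C.connected_toSimpleGraph
  have h2 := hC.card_filter_degree_le_one_le_two fun v => (hdegC v).trans_le (hdeg v)
  have h3 : 2 < #{v | (G.induce C.supp).degree v ≤ 1} := by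
    refine two_lt_card.2
      ⟨⟨x, hmem .rfl⟩, ?_, ⟨u, hmem hreach⟩, ?_, ⟨w, hmem hreach'⟩, ?_, ?_⟩
    all_goals simp [hdegC, hx, hu, hw, hxu, hxw, huw]
  omega
end SimpleGraph
end Paths

section EdgeColoring
variable {V : Type*}

def IsProperOn (E : Set (Sym2 V)) (c : Sym2 V → ℕ) : Prop :=
  ∀ e ∈ E, ∀ f ∈ E, e ≠ f → (∃ v, v ∈ e ∧ v ∈ f) → c e ≠ c f

def IsMissing (E : Set (Sym2 V)) (c : Sym2 V → ℕ) (v : V) (a : ℕ) : Prop :=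
  ∀ e ∈ E, v ∈ e → c e ≠ a

def EdgeColorableOn (k : ℕ) (E : Set (Sym2 V)) : Prop :=
  ∃ c : Sym2 V → ℕ, IsProperOn E c ∧ ∀ e ∈ E, c e < k

variable {E F : Set (Sym2 V)} {c : Sym2 V → ℕ} {v : V} {a : ℕ}

lemma IsProperOn.mono (hc : IsProperOn E c) (h : F ⊆ E) : IsProperOn F c :=
  fun e he f hf => hc e (h he) f (h hf)

lemma IsMissing.mono (hc : IsMissing E c v a) (h : F ⊆ E) : IsMissing F c v a :=
  fun e he => hc e (h he)

lemma IsProperOn.update [DecidableEq V] {x y : V} {γ : ℕ} (hc : IsProperOn (E \ {s(x, y)}) c)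
    (hx : IsMissing (E \ {s(x, y)}) c x γ) (hy : IsMissing (E \ {s(x, y)}) c y γ) :
    IsProperOn E (Function.update c s(x, y) γ) := by
  have hmiss : ∀ e ∈ E, e ≠ s(x, y) → ∀ v ∈ e, v ∈ s(x, y) → c e ≠ γ := by
    intro e he hne v hve hv
    rcases Sym2.mem_iff.1 hv with rfl | rfl
    exacts [hx e ⟨he, hne⟩ hve, hy e ⟨he, hne⟩ hve]
  rintro e he f hf hef ⟨v, hve, hvf⟩
  by_cases he' : e = s(x, y) <;> by_cases hf' : f = s(x, y)
  · exact absurd (he'.trans hf'.symm) hef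
  · subst he'
    rw [Function.update_self, Function.update_of_ne hf']
    exact (hmiss f hf hf' v hvf hve).symm
  · subst hf'
    rw [Function.update_self, Function.update_of_ne he']
    exact hmiss e he he' v hve hvf
  · rw [Function.update_of_ne he', Function.update_of_ne hf']
    exact hc e ⟨he, he'⟩ f ⟨hf, hf'⟩ hef ⟨v, hve, hvf⟩

lemma edgeColorableOn_of_isMissing {k : ℕ} {x y : V} {γ : ℕ}
    (hc : IsProperOn (E \ {s(x, y)}) c) (hck : ∀ e ∈ E \ {s(x, y)}, c e < k)
    (hx : IsMissing (E \ {s(x, y)}) c x γ) (hy : IsMissing (E \ {s(x, y)}) c y γ) (hγ : γ < k) :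
    EdgeColorableOn k E := by
  classical
  refine ⟨_, hc.update hx hy, fun e he => ?_⟩
  by_cases he' : e = s(x, y)
  · rwa [he', Function.update_self]
  · rw [Function.update_of_ne he']
    exact hck e ⟨he, he'⟩

lemma exists_isMissing_lt [Fintype V] {G : SimpleGraph V} [DecidableRel G.Adj]
    {k : ℕ} (hE : E ⊆ G.edgeSet) (c : Sym2 V → ℕ) (hv : G.degree v < k) :
    ∃ a < k, IsMissing E c v a := by
  classical
  have hcard : #((G.incidenceFinset v).image c) < #(range k) := by
    rw [card_range]
    exact card_image_le.trans_lt ((G.card_incidenceFinset_eq_degree v).trans_lt hv)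
  obtain ⟨a, ha, hav⟩ := exists_mem_notMem_of_card_lt_card hcard
  refine ⟨a, mem_range.1 ha, fun e he hve hca => hav (mem_image.2 ⟨e, ?_, hca⟩)⟩
  exact (G.mem_incidenceFinset v e).2 ⟨hE he, hve⟩

def kempeGraph (E : Set (Sym2 V)) (c : Sym2 V → ℕ) (α β : ℕ) : SimpleGraph V :=
  SimpleGraph.fromEdgeSet {e | e ∈ E ∧ (c e = α ∨ c e = β)}

open Classical in
/-- Applying `Equiv.swap α β` to every edge that meets the α/β-component of `u` changes exactly
the colors of that component, since other colors are fixed by the swap. -/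
noncomputable def kempeSwap (E : Set (Sym2 V)) (c : Sym2 V → ℕ) (α β : ℕ) (u : V) :
    Sym2 V → ℕ :=
  fun e => if ∃ a ∈ e, (kempeGraph E c α β).Reachable u a then Equiv.swap α β (c e) else c e

variable {α β : ℕ} {u : V} {e : Sym2 V}

lemma kempeGraph_reachable_of_mem (he : e ∈ E) (hce : c e = α ∨ c e = β) {a b : V}
    (ha : a ∈ e) (hb : b ∈ e) : (kempeGraph E c α β).Reachable a b := by
  induction e using Sym2.ind with | h x y => ?_
  have hxy : (kempeGraph E c α β).Reachable x y := by
    by_cases h : x = y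
    · exact h ▸ .rfl
    · exact SimpleGraph.Adj.reachable (G := kempeGraph E c α β)
        ((SimpleGraph.fromEdgeSet_adj _).2 ⟨⟨he, hce⟩, h⟩)
  rcases Sym2.mem_iff.1 ha with rfl | rfl <;> rcases Sym2.mem_iff.1 hb with rfl | rfl
  exacts [.rfl, hxy, hxy.symm, .rfl]

lemma kempeSwap_eq_of_not_reachable (he : e ∈ E) (hve : v ∈ e)
    (hv : ¬(kempeGraph E c α β).Reachable u v) : kempeSwap E c α β u e = c e := by
  rw [kempeSwap]
  split_ifs with h
  · obtain ⟨a, hae, ha⟩ := h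
    refine Equiv.swap_apply_of_ne_of_ne ?_ ?_ <;> intro hce <;>
      exact hv (ha.trans (kempeGraph_reachable_of_mem he (by omega) hae hve))
  · rfl

lemma IsProperOn.kempeSwap (hc : IsProperOn E c) : IsProperOn E (kempeSwap E c α β u) := by
  rintro e he f hf hef ⟨v, hve, hvf⟩
  by_cases hv : (kempeGraph E c α β).Reachable u v
  · have hswap : ∀ g, v ∈ g → _root_.kempeSwap E c α β u g = Equiv.swap α β (c g) :=
      fun g hvg => if_pos ⟨v, hvg, hv⟩
    rw [hswap e hve, hswap f hvf]
    exact (Equiv.injective _).ne (hc e he f hf hef ⟨v, hve, hvf⟩)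
  · rw [kempeSwap_eq_of_not_reachable he hve hv, kempeSwap_eq_of_not_reachable hf hvf hv]
    exact hc e he f hf hef ⟨v, hve, hvf⟩

lemma isMissing_kempeSwap_self (hα : IsMissing E c u α) :
    IsMissing E (kempeSwap E c α β u) u β := by
  intro e he hue
  rw [kempeSwap, if_pos ⟨u, hue, .rfl⟩, Ne, Equiv.swap_apply_eq_iff, Equiv.swap_apply_right]
  exact hα e he hue

lemma IsMissing.kempeSwap_of_not_reachable (hv : IsMissing E c v a)
    (hnr : ¬(kempeGraph E c α β).Reachable u v) : IsMissing E (kempeSwap E c α β u) v a := by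
  intro e he hve
  rw [kempeSwap_eq_of_not_reachable he hve hnr]
  exact hv e he hve

lemma kempeSwap_lt {k : ℕ} (hck : ∀ e ∈ E, c e < k) (hα : α < k) (hβ : β < k) :
    ∀ e ∈ E, kempeSwap E c α β u e < k := by
  intro e he
  rw [kempeSwap, Equiv.swap_apply_def]
  split_ifs <;> first | assumption | exact hck e he

lemma degree_kempeGraph_le_card [Fintype V] [DecidableRel (kempeGraph E c α β).Adj]
    (hc : IsProperOn E c) {S : Finset ℕ}
    (hS : ∀ e ∈ E, v ∈ e → (c e = α ∨ c e = β) → c e ∈ S) :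
    (kempeGraph E c α β).degree v ≤ #S := by
  rw [← SimpleGraph.card_neighborFinset_eq_degree]
  have hadj {w : V} (hw : w ∈ (kempeGraph E c α β).neighborFinset v) :
      s(v, w) ∈ E ∧ (c s(v, w) = α ∨ c s(v, w) = β) :=
    ((SimpleGraph.fromEdgeSet_adj _).1
      ((SimpleGraph.mem_neighborFinset (kempeGraph E c α β) v w).1 hw)).1
  refine card_le_card_of_injOn (fun w => c s(v, w)) (fun w hw => ?_) (fun w hw w' hw' h => ?_)
  · exact hS _ (hadj hw).1 (Sym2.mem_mk_left _ _) (hadj hw).2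
  · by_contra hne
    exact hc _ (hadj hw).1 _ (hadj hw').1 (fun h' => hne (Sym2.congr_right.1 h'))
      ⟨v, Sym2.mem_mk_left _ _, Sym2.mem_mk_left _ _⟩ h

lemma degree_kempeGraph_le_two [Fintype V] [DecidableRel (kempeGraph E c α β).Adj]
    (hc : IsProperOn E c) (v : V) : (kempeGraph E c α β).degree v ≤ 2 :=
  (degree_kempeGraph_le_card (S := {α, β}) hc fun e _ _ h => by simpa using h).trans card_le_two

lemma degree_kempeGraph_le_one [Fintype V] [DecidableRel (kempeGraph E c α β).Adj]
    (hc : IsProperOn E c) (hv : IsMissing E c v α ∨ IsMissing E c v β) :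
    (kempeGraph E c α β).degree v ≤ 1 := by
  rcases hv with hv | hv
  · refine (degree_kempeGraph_le_card (S := {β}) hc fun e he hve h => ?_).trans_eq
      (card_singleton _)
    simpa [hv e he hve] using h
  · refine (degree_kempeGraph_le_card (S := {α}) hc fun e he hve h => ?_).trans_eq
      (card_singleton _)
    simpa [hv e he hve] using h

lemma edgeColorableOn_of_not_reachable {k : ℕ} {x w : V}
    (hc : IsProperOn (E \ {s(x, w)}) c) (hck : ∀ e ∈ E \ {s(x, w)}, c e < k)
    (hα : IsMissing (E \ {s(x, w)}) c x α) (hβ : IsMissing (E \ {s(x, w)}) c w β)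
    (hαk : α < k) (hβk : β < k) (hxw : ¬(kempeGraph (E \ {s(x, w)}) c α β).Reachable x w) :
    EdgeColorableOn k E :=
  edgeColorableOn_of_isMissing hc.kempeSwap (kempeSwap_lt hck hαk hβk)
    (isMissing_kempeSwap_self hα) (hβ.kempeSwap_of_not_reachable hxw) hβk

end EdgeColoring

section Fans
variable {V : Type*}

structure IsFan (E : Set (Sym2 V)) (c : Sym2 V → ℕ) (x : V) (f : ℕ → V) (n : ℕ) :
    Prop where
  injOn : Set.InjOn f (Set.Iic n)
  ne_center : ∀ i ≤ n, f i ≠ x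
  mem : ∀ i ≤ n, s(x, f i) ∈ E
  isMissing : ∀ i < n, IsMissing (E \ {s(x, f 0)}) c (f i) (c s(x, f (i + 1)))

variable {E : Set (Sym2 V)} {c : Sym2 V → ℕ} {x : V} {f : ℕ → V} {n i j : ℕ} {e : Sym2 V}

lemma mk_ne_mk_of_injOn (hf : Set.InjOn f (Set.Iic n)) (hi : i ≤ n) (hj : j ≤ n)
    (hij : i ≠ j) :
    s(x, f i) ≠ s(x, f j) :=
  fun h => hij (hf hi hj (Sym2.congr_right.1 h))

namespace IsFan

lemma mono (hfan : IsFan E c x f n) {m : ℕ} (hm : m ≤ n) : IsFan E c x f m where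
  injOn := hfan.injOn.mono (Set.Iic_subset_Iic.2 hm)
  ne_center i hi := hfan.ne_center i (hi.trans hm)
  mem i hi := hfan.mem i (hi.trans hm)
  isMissing i hi := hfan.isMissing i (hi.trans_le hm)

lemma mem_diff (hfan : IsFan E c x f n) (hi : i + 1 ≤ n) :
    s(x, f (i + 1)) ∈ E \ {s(x, f 0)} :=
  ⟨hfan.mem _ hi, mk_ne_mk_of_injOn hfan.injOn hi (Nat.zero_le n) i.succ_ne_zero⟩

end IsFan

variable [DecidableEq V]

def fanRotate (c : Sym2 V → ℕ) (x : V) (f : ℕ → V) : ℕ → Sym2 V → ℕ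
  | 0 => c
  | n + 1 => Function.update (fanRotate c x f n) s(x, f n) (c s(x, f (n + 1)))

lemma fanRotate_of_forall_ne (h : ∀ i < n, e ≠ s(x, f i)) : fanRotate c x f n e = c e := by
  induction n with
  | zero => rfl
  | succ n ih =>
    rw [fanRotate, Function.update_of_ne (h n n.lt_succ_self)]
    exact ih fun i hi => h i (hi.trans n.lt_succ_self)

lemma fanRotate_mk (hf : Set.InjOn f (Set.Iic n)) (hi : i < n) :
    fanRotate c x f n s(x, f i) = c s(x, f (i + 1)) := by
  induction n with
  | zero => omega
  | succ n ih =>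
    rw [fanRotate]
    rcases (Nat.lt_succ_iff.1 hi).eq_or_lt with rfl | hi
    · exact Function.update_self ..
    · rw [Function.update_of_ne (mk_ne_mk_of_injOn hf (hi.le.trans n.le_succ) n.le_succ hi.ne),
        ih (hf.mono (Set.Iic_subset_Iic.2 n.le_succ)) hi]

namespace IsFan

lemma fanRotate_cases (hfan : IsFan E c x f n) (he : e ∈ E \ {s(x, f n)}) :
    (∃ i < n, e = s(x, f i) ∧ fanRotate c x f n e = c s(x, f (i + 1))) ∨
      (e ∈ E \ {s(x, f 0)} ∧ fanRotate c x f n e = c e) := by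
  by_cases h : ∃ i < n, e = s(x, f i)
  · obtain ⟨i, hi, rfl⟩ := h
    exact Or.inl ⟨i, hi, rfl, fanRotate_mk hfan.injOn hi⟩
  · push Not at h
    refine Or.inr ⟨⟨he.1, ?_⟩, fanRotate_of_forall_ne h⟩
    rcases n.eq_zero_or_pos with rfl | hn
    exacts [he.2, h 0 hn]

lemma fanRotate_lt (hfan : IsFan E c x f n) {k : ℕ} (hck : ∀ e ∈ E \ {s(x, f 0)}, c e < k) :
    ∀ e ∈ E \ {s(x, f n)}, fanRotate c x f n e < k := by
  intro e he
  rcases hfan.fanRotate_cases he with ⟨i, hi, -, hrot⟩ | ⟨he₀, hrot⟩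
  · exact hrot ▸ hck _ (hfan.mem_diff hi)
  · exact hrot ▸ hck e he₀

lemma isMissing_fanRotate_center (hfan : IsFan E c x f n) {γ : ℕ}
    (h : IsMissing (E \ {s(x, f 0)}) c x γ) :
    IsMissing (E \ {s(x, f n)}) (fanRotate c x f n) x γ := by
  intro e he hxe
  rcases hfan.fanRotate_cases he with ⟨i, hi, -, hrot⟩ | ⟨he₀, hrot⟩
  · exact hrot ▸ h _ (hfan.mem_diff hi) (Sym2.mem_mk_left _ _)
  · exact hrot ▸ h e he₀ hxe

lemma isMissing_fanRotate_last (hfan : IsFan E c x f n) {γ : ℕ}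
    (h : IsMissing (E \ {s(x, f 0)}) c (f n) γ) :
    IsMissing (E \ {s(x, f n)}) (fanRotate c x f n) (f n) γ := by
  intro e he hne
  rcases hfan.fanRotate_cases he with ⟨i, hi, rfl, -⟩ | ⟨he₀, hrot⟩
  · rcases Sym2.mem_iff.1 hne with h | h
    · exact absurd h (hfan.ne_center n le_rfl)
    · exact absurd (hfan.injOn Set.self_mem_Iic hi.le h) hi.ne'
  · exact hrot ▸ h e he₀ hne

lemma isProperOn_fanRotate (hfan : IsFan E c x f n) (hc : IsProperOn (E \ {s(x, f 0)}) c) :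
    IsProperOn (E \ {s(x, f n)}) (fanRotate c x f n) := by
  induction n with
  | zero => exact hc
  | succ n ih =>
    have hfan' := hfan.mono n.le_succ
    have hsub : (E \ {s(x, f (n + 1))}) \ {s(x, f n)} ⊆ E \ {s(x, f n)} :=
      Set.sdiff_subset_sdiff_left Set.sdiff_subset
    refine IsProperOn.update ((ih hfan').mono hsub) ?_
      ((hfan'.isMissing_fanRotate_last (hfan.isMissing n n.lt_succ_self)).mono hsub)
    rintro e ⟨⟨he, hne⟩, hne'⟩ hxe
    have hn := hfan.mem_diff (i := n) le_rfl
    rcases hfan'.fanRotate_cases ⟨he, hne'⟩ with ⟨i, hi, rfl, hrot⟩ | ⟨he₀, hrot⟩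
    · rw [hrot]
      exact hc _ (hfan.mem_diff (by omega)) _ hn
        (mk_ne_mk_of_injOn hfan.injOn (by omega) le_rfl (by omega))
        ⟨x, Sym2.mem_mk_left _ _, Sym2.mem_mk_left _ _⟩
    · rw [hrot]
      exact hc e he₀ _ hn hne ⟨x, hxe, Sym2.mem_mk_left _ _⟩

end IsFan
end Fans

section Vizing
variable {V : Type*} {E : Set (Sym2 V)} {c : Sym2 V → ℕ} {x : V} {f : ℕ → V} {n : ℕ}

lemma IsFan.extend (hfan : IsFan E c x f n) {w : V}
    (hw : s(x, w) ∈ E \ {s(x, f 0)}) (hwx : w ≠ x) (hwf : ∀ i ≤ n, f i ≠ w)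
    (hmiss : IsMissing (E \ {s(x, f 0)}) c (f n) (c s(x, w))) :
    IsFan E c x (Function.update f (n + 1) w) (n + 1) := by
  have hf {i : ℕ} (hi : i ≤ n) : Function.update f (n + 1) w i = f i :=
    Function.update_of_ne (by omega) _ _
  have hlast : Function.update f (n + 1) w (n + 1) = w := Function.update_self ..
  refine ⟨fun i hi j hj hij => ?_, fun i hi => ?_, fun i hi => ?_, fun i hi => ?_⟩
  · rcases Nat.le_succ_iff.1 hi with hi | rfl <;> rcases Nat.le_succ_iff.1 hj with hj | rfl
    · exact hfan.injOn hi hj (by rwa [hf hi, hf hj] at hij)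
    · exact absurd (by rwa [hf hi, hlast] at hij) (hwf i hi)
    · exact absurd (by rwa [hf hj, hlast] at hij) (hwf j hj).symm
    · rfl
  · rcases Nat.le_succ_iff.1 hi with hi | rfl
    · exact hf hi ▸ hfan.ne_center i hi
    · rwa [hlast]
  · rcases Nat.le_succ_iff.1 hi with hi | rfl
    · exact hf hi ▸ hfan.mem i hi
    · rw [hlast]
      exact hw.1
  · rw [hf (Nat.zero_le n), hf (Nat.le_of_lt_succ hi)]
    rcases (Nat.lt_succ_iff.1 hi).lt_or_eq with hi | rfl
    · rw [hf hi]
      exact hfan.isMissing i hi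
    · rwa [hlast]

lemma exists_saturated_fan [Fintype V] {G : SimpleGraph V} (hE : E ⊆ G.edgeSet)
    {y : V} (hxy : s(x, y) ∈ E) (c : Sym2 V → ℕ) :
    ∃ f n, f 0 = y ∧ IsFan E c x f n ∧ ∀ w, s(x, w) ∈ E \ {s(x, y)} →
      IsMissing (E \ {s(x, y)}) c (f n) (c s(x, w)) → ∃ i ≤ n, f i = w := by
  set N := {n | ∃ f : ℕ → V, f 0 = y ∧ IsFan E c x f n}
  have hzero : 0 ∈ N := ⟨fun _ => y, rfl, fun i hi j hj _ => by simp_all,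
    fun _ _ => (G.ne_of_adj (hE hxy)).symm, fun _ _ => hxy, fun _ hi => absurd hi (by omega)⟩
  have hbdd : BddAbove N := by
    refine ⟨Fintype.card V, fun n ⟨f, _, hfan⟩ => ?_⟩
    have := card_le_card_of_injOn (s := Iic n) f (fun _ _ => mem_univ _) (by simpa using hfan.injOn)
    simp only [Nat.card_Iic, card_univ] at this
    omega
  obtain ⟨f, rfl, hfan⟩ := Nat.sSup_mem ⟨0, hzero⟩ hbdd
  refine ⟨f, sSup N, rfl, hfan, fun w hw hmiss => ?_⟩
  by_contra! hwf
  have hext := hfan.extend hw (G.ne_of_adj (hE hw.1)).symm hwf hmiss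
  have : sSup N + 1 ≤ sSup N := le_csSup hbdd ⟨_, Function.update_of_ne (by omega) _ _, hext⟩
  omega

lemma IsFan.exists_edge_of_not_isMissing (hfan : IsFan E c x f n)
    (hsat : ∀ w, s(x, w) ∈ E \ {s(x, f 0)} →
      IsMissing (E \ {s(x, f 0)}) c (f n) (c s(x, w)) → ∃ i ≤ n, f i = w) {β : ℕ}
    (hβ : IsMissing (E \ {s(x, f 0)}) c (f n) β) (hβx : ¬IsMissing (E \ {s(x, f 0)}) c x β) :
    ∃ j, j + 1 < n ∧ c s(x, f (j + 1)) = β := by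
  simp only [IsMissing, not_forall, not_not] at hβx
  obtain ⟨e, he, hxe, hce⟩ := hβx
  obtain ⟨w, rfl⟩ := Sym2.mem_iff_exists.1 hxe
  obtain ⟨i, hi, rfl⟩ := hsat w he (hce ▸ hβ)
  obtain ⟨j, rfl⟩ := Nat.exists_eq_succ_of_ne_zero (n := i) fun h => he.2 (by rw [h]; rfl)
  refine ⟨j, hi.lt_of_ne ?_, hce⟩
  rintro rfl
  exact hβ _ he (Sym2.mem_mk_right _ _) hce

lemma IsFan.kempeGraph_fanRotate_adj [DecidableEq V] (hfan : IsFan E c x f n)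
    (hc : IsProperOn (E \ {s(x, f 0)}) c) {α β j m : ℕ}
    (hα : IsMissing (E \ {s(x, f 0)}) c x α)
    (hj : j + 1 ≤ n) (hβ : c s(x, f (j + 1)) = β) (hm : m ≤ n) {a b : V}
    (hab : (kempeGraph (E \ {s(x, f m)}) (fanRotate c x f m) α β).Adj a b) :
    (kempeGraph (E \ {s(x, f 0)}) c α β).Adj a b ∨ j < m ∧ s(a, b) = s(x, f j) := by
  obtain ⟨⟨he, hcol⟩, hne⟩ := (SimpleGraph.fromEdgeSet_adj _).1 hab
  rcases (hfan.mono hm).fanRotate_cases he with ⟨i, hi, heq, hrot⟩ | ⟨he₀, hrot⟩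
  · rw [hrot] at hcol
    have hi' := hfan.mem_diff (i := i) (by omega)
    rcases hcol with hcol | hcol
    · exact absurd hcol (hα _ hi' (Sym2.mem_mk_left _ _))
    · obtain rfl : i = j := by
        by_contra hij
        exact hc _ hi' _ (hfan.mem_diff hj)
          (mk_ne_mk_of_injOn hfan.injOn (by omega) hj (by omega))
          ⟨x, Sym2.mem_mk_left _ _, Sym2.mem_mk_left _ _⟩ (hcol.trans hβ.symm)
      exact Or.inr ⟨hi, heq⟩
  · exact Or.inl ((SimpleGraph.fromEdgeSet_adj _).2 ⟨⟨he₀, hrot ▸ hcol⟩, hne⟩)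

theorem edgeColorableOn_of_diff [Fintype V] {G : SimpleGraph V} [DecidableRel G.Adj] {k : ℕ}
    (hdeg : ∀ v, G.degree v < k) (hE : E ⊆ G.edgeSet) {y : V} (hxy : s(x, y) ∈ E)
    (hc : IsProperOn (E \ {s(x, y)}) c) (hck : ∀ e ∈ E \ {s(x, y)}, c e < k) :
    EdgeColorableOn k E := by
  classical
  have hE₀ : E \ {s(x, y)} ⊆ G.edgeSet := Set.sdiff_subset.trans hE
  obtain ⟨f, n, rfl, hfan, hsat⟩ := exists_saturated_fan hE hxy c
  obtain ⟨α, hαk, hα⟩ := exists_isMissing_lt hE₀ c (hdeg x)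
  obtain ⟨β, hβk, hβ⟩ := exists_isMissing_lt hE₀ c (hdeg (f n))
  by_cases hβx : IsMissing (E \ {s(x, f 0)}) c x β
  · exact edgeColorableOn_of_isMissing (hfan.isProperOn_fanRotate hc) (hfan.fanRotate_lt hck)
      (hfan.isMissing_fanRotate_center hβx) (hfan.isMissing_fanRotate_last hβ) hβk
  obtain ⟨j, hjn, hβj⟩ := hfan.exists_edge_of_not_isMissing hsat hβ hβx
  have hβj' : IsMissing (E \ {s(x, f 0)}) c (f j) β := hβj ▸ hfan.isMissing j (by omega)
  set H := kempeGraph (E \ {s(x, f 0)}) c α β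
  -- `x`, `f j` and `f n` are ends of α/β-paths, so at most two of them lie on the same path
  have hpath : H.Reachable x (f j) → ¬H.Reachable x (f n) :=
    SimpleGraph.not_reachable_of_degree_le_one (degree_kempeGraph_le_two hc)
      (hfan.ne_center j (by omega)).symm (hfan.ne_center n le_rfl).symm
      (fun h => by have := hfan.injOn (by simp; omega) Set.self_mem_Iic h; omega)
      (degree_kempeGraph_le_one hc (.inl hα)) (degree_kempeGraph_le_one hc (.inr hβj'))
      (degree_kempeGraph_le_one hc (.inr hβ))
  by_cases hreach : H.Reachable x (f j)
  · -- the rotation adds only the α/β-edge `x f j`, which lies on the chain of `x`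
    refine edgeColorableOn_of_not_reachable (hfan.isProperOn_fanRotate hc) (hfan.fanRotate_lt hck)
      (hfan.isMissing_fanRotate_center hα) (hfan.isMissing_fanRotate_last hβ) hαk hβk
      fun h => hpath hreach (.of_forall_adj (fun a b hab => ?_) h)
    rcases hfan.kempeGraph_fanRotate_adj hc hα hjn.le hβj le_rfl hab with h | ⟨-, h⟩
    · exact h.reachable
    · rcases Sym2.eq_iff.1 h with ⟨rfl, rfl⟩ | ⟨rfl, rfl⟩
      exacts [hreach, hreach.symm]
  · -- rotating up to `f j` creates no new α/β-edge
    have hfan' := hfan.mono (m := j) (by omega)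
    refine edgeColorableOn_of_not_reachable (hfan'.isProperOn_fanRotate hc)
      (hfan'.fanRotate_lt hck) (hfan'.isMissing_fanRotate_center hα)
      (hfan'.isMissing_fanRotate_last hβj') hαk hβk
      fun h => hreach (.of_forall_adj (fun a b hab => ?_) h)
    rcases hfan.kempeGraph_fanRotate_adj hc hα hjn.le hβj (by omega) hab with h | ⟨h, -⟩
    · exact h.reachable
    · exact absurd h (lt_irrefl j)

theorem edgeColorableOn_of_degree_lt [Fintype V] {G : SimpleGraph V} [DecidableRel G.Adj]
    {k : ℕ} (hdeg : ∀ v, G.degree v < k) {E : Finset (Sym2 V)}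
    (hE : (E : Set (Sym2 V)) ⊆ G.edgeSet) :
    EdgeColorableOn k (E : Set (Sym2 V)) := by
  classical
  induction E using Finset.induction_on with
  | empty => exact ⟨fun _ => 0, by simp [IsProperOn], by simp⟩
  | insert e E he ih =>
    rw [coe_insert] at hE ⊢
    obtain ⟨c, hc, hck⟩ := ih (Set.insert_subset_iff.1 hE).2
    have hdiff : insert e (E : Set (Sym2 V)) \ {e} = E := Set.insert_sdiff_self_of_notMem he
    induction e using Sym2.ind with
    | h x y =>
      exact edgeColorableOn_of_diff hdeg hE (Set.mem_insert _ _) (by rwa [hdiff]) (by rwa [hdiff])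

theorem exists_isProperEdgeColoring_lt_maxDegree_add_one [Fintype V] (G : SimpleGraph V)
    [DecidableRel G.Adj] : ∃ c : Sym2 V → ℕ, (∀ e ∈ G.edgeSet, c e < G.maxDegree + 1) ∧
      IsProperEdgeColoring G c := by
  obtain ⟨c, hc, hck⟩ := edgeColorableOn_of_degree_lt
    (fun v => Nat.lt_succ_of_le (G.degree_le_maxDegree v)) (E := G.edgeFinset) (by simp)
  rw [SimpleGraph.coe_edgeFinset] at hc hck
  exact ⟨c, hck, hc⟩

end Vizing

section RainbowDisconnection
variable {V : Type*} {G : SimpleGraph V}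

lemma lamST_le_card {s t : V} {S : Finset (Sym2 V)} (hS : ↑S ⊆ G.edgeSet)
    (hsep : Separates G ↑S s t) : lamST G s t ≤ S.card := by
  unfold lamST
  exact Nat.sInf_le ⟨S, hS, hsep, rfl⟩

lemma exists_card_eq_lamST {s t : V} {T : Finset (Sym2 V)} (hT : ↑T ⊆ G.edgeSet)
    (hsep : Separates G ↑T s t) :
    ∃ S : Finset (Sym2 V), ↑S ⊆ G.edgeSet ∧ Separates G ↑S s t ∧ S.card = lamST G s t :=
  Nat.sInf_mem (s := {n | ∃ S : Finset (Sym2 V), (S : Set (Sym2 V)) ⊆ G.edgeSet ∧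
    Separates G S s t ∧ S.card = n}) ⟨_, T, hT, hsep, rfl⟩

lemma edgeConn_le_card {S : Finset (Sym2 V)} (hS : ↑S ⊆ G.edgeSet)
    (hdis : ¬(G.deleteEdges ↑S).Connected) : edgeConn G ≤ S.card := by
  unfold edgeConn
  exact Nat.sInf_le ⟨S, hS, hdis, rfl⟩

lemma separates_incidenceSet {s t : V} (hst : s ≠ t) : Separates G (G.incidenceSet s) s t := by
  rintro ⟨p⟩
  cases p with
  | nil => exact hst rfl
  | cons h _ =>
    obtain ⟨hadj, hnot⟩ := (SimpleGraph.deleteEdges_adj ..).1 h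
    exact hnot ⟨hadj, Sym2.mem_mk_left _ _⟩

lemma incidenceFinset_subset_and_separates [Fintype V] [DecidableEq V] [DecidableRel G.Adj]
    {s t : V} (hst : s ≠ t) :
    ↑(G.incidenceFinset s) ⊆ G.edgeSet ∧ Separates G ↑(G.incidenceFinset s) s t := by
  rw [SimpleGraph.coe_incidenceFinset]
  exact ⟨G.incidenceSet_subset s, separates_incidenceSet hst⟩

lemma lamST_le_degree [Fintype V] [DecidableRel G.Adj] {s t : V} (hst : s ≠ t) :
    lamST G s t ≤ G.degree s := by
  classical
  obtain ⟨hS, hsep⟩ := incidenceFinset_subset_and_separates (G := G) hst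
  exact (lamST_le_card hS hsep).trans_eq (G.card_incidenceFinset_eq_degree s)

lemma edgeConn_le_lamST [Fintype V] {s t : V} (hst : s ≠ t) : edgeConn G ≤ lamST G s t := by
  classical
  obtain ⟨hS, hsep⟩ := incidenceFinset_subset_and_separates (G := G) hst
  obtain ⟨S, hS, hsep, hcard⟩ := exists_card_eq_lamST hS hsep
  exact hcard ▸ edgeConn_le_card hS fun hconn => hsep (hconn.preconnected s t)

lemma edgeConn_le_lamPlus [Fintype V] [Nontrivial V] (G : SimpleGraph V) :
    edgeConn G ≤ lamPlus G := by
  classical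
  obtain ⟨s, t, hst⟩ := exists_pair_ne V
  have hbdd : BddAbove {n | ∃ s t : V, s ≠ t ∧ lamST G s t = n} := by
    refine ⟨G.maxDegree, ?_⟩
    rintro _ ⟨s, t, hst, rfl⟩
    exact (lamST_le_degree hst).trans (G.degree_le_maxDegree s)
  exact (edgeConn_le_lamST hst).trans (le_csSup hbdd ⟨s, t, hst, rfl⟩)

lemma IsProperEdgeColoring.isRDColoring [Fintype V] {α : Type*} {c : Sym2 V → α}
    (hc : IsProperEdgeColoring G c) : IsRDColoring G c := by
  classical
  intro s t hst
  obtain ⟨hS, hsep⟩ := incidenceFinset_subset_and_separates (G := G) hst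
  refine ⟨G.incidenceFinset s, hS, fun e he f hf hef => ?_, hsep⟩
  rw [Finset.mem_coe, SimpleGraph.mem_incidenceFinset] at he hf
  by_contra hne
  exact hc e he.1 f hf.1 hne ⟨s, he.2, hf.2⟩ hef

lemma lamPlus_le_of_isRDColoring {c : Sym2 V → ℕ} {k : ℕ} (hc : IsRDColoring G c)
    (hk : ∀ e ∈ G.edgeSet, c e < k) : lamPlus G ≤ k := by
  classical
  refine csSup_le' ?_
  rintro _ ⟨s, t, hst, rfl⟩
  obtain ⟨S, hS, hinj, hsep⟩ := hc s t hst
  calc lamST G s t ≤ #S := lamST_le_card hS hsep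
    _ = #(S.image c) := (card_image_of_injOn hinj).symm
    _ ≤ #(range k) := card_le_card fun a ha => by
      obtain ⟨e, he, rfl⟩ := mem_image.1 ha
      exact mem_range.2 (hk e (hS he))
    _ = k := card_range k

lemma exists_isRDColoring_lt_rd [Fintype V] (G : SimpleGraph V) :
    ∃ c : Sym2 V → ℕ, (∀ e ∈ G.edgeSet, c e < rd G) ∧ IsRDColoring G c := by
  classical
  obtain ⟨c, hck, hc⟩ := exists_isProperEdgeColoring_lt_maxDegree_add_one G
  exact Nat.sInf_mem
    (s := {k | ∃ c : Sym2 V → ℕ, (∀ e ∈ G.edgeSet, c e < k) ∧ IsRDColoring G c})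
    ⟨_, c, hck, hc.isRDColoring⟩

lemma exists_isProperEdgeColoring_lt_chromIndex [Fintype V] (G : SimpleGraph V) :
    ∃ c : Sym2 V → ℕ, (∀ e ∈ G.edgeSet, c e < chromIndex G) ∧
      IsProperEdgeColoring G c := by
  classical
  exact Nat.sInf_mem (s := {k | ∃ c : Sym2 V → ℕ, (∀ e ∈ G.edgeSet, c e < k) ∧
    IsProperEdgeColoring G c}) ⟨_, exists_isProperEdgeColoring_lt_maxDegree_add_one G⟩

lemma lamPlus_le_rd [Fintype V] (G : SimpleGraph V) : lamPlus G ≤ rd G := by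
  obtain ⟨c, hck, hc⟩ := exists_isRDColoring_lt_rd G
  exact lamPlus_le_of_isRDColoring hc hck

lemma rd_le_chromIndex [Fintype V] (G : SimpleGraph V) : rd G ≤ chromIndex G := by
  obtain ⟨c, hck, hc⟩ := exists_isProperEdgeColoring_lt_chromIndex G
  unfold rd
  exact Nat.sInf_le ⟨c, hck, hc.isRDColoring⟩

lemma chromIndex_le_maxDegree_add_one [Fintype V] (G : SimpleGraph V) [DecidableRel G.Adj] :
    chromIndex G ≤ G.maxDegree + 1 := by
  unfold chromIndex
  exact Nat.sInf_le (exists_isProperEdgeColoring_lt_maxDegree_add_one G)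

end RainbowDisconnection

theorem rd_chain_general (G : SimpleGraph V) [DecidableRel G.Adj] [Nontrivial V] :
    edgeConn G ≤ lamPlus G ∧ lamPlus G ≤ rd G ∧ rd G ≤ chromIndex G ∧
      chromIndex G ≤ G.maxDegree + 1 :=
  ⟨edgeConn_le_lamPlus G, lamPlus_le_rd G, rd_le_chromIndex G,
    chromIndex_le_maxDegree_add_one G⟩

theorem rd_chain (G : SimpleGraph V) [DecidableRel G.Adj] [Nontrivial V] (hG : G.Connected) :
    edgeConn G ≤ lamPlus G ∧ lamPlus G ≤ rd G ∧ rd G ≤ chromIndex G ∧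
      chromIndex G ≤ G.maxDegree + 1 :=
  rd_chain_general G
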